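/- Let n ≥ 2, α,β ∈ ℝ^{n−2}, γ ∈ ℝ. Then u′(α,β,γ) preserves the symplectic form ω_h, i.e., u′(α,β,γ)ᵀ · J_h · u′(α,β,γ) = J_h. -/

import Mathlib

open Matrix

noncomputable section

def I2 : Matrix (Fin 2) (Fin 2) ℝ := !![1, 0; 0, 1]
def Rm : Matrix (Fin 2) (Fin 2) ℝ := !![0, -1; 1, 0]

/-- The symplectic matrix `J_h`: as an n×n array of 2×2 blocks, it has the block `R` in
positions (1,n) and (n,1) and in diagonal positions (k,k) for 2 ≤ k ≤ n−1 (1-based). -/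
def Jh (n : ℕ) : Matrix (Fin (2*n)) (Fin (2*n)) ℝ :=
  Matrix.of fun r c =>
    if ((r:ℕ)/2 = 0 ∧ (c:ℕ)/2 = n - 1) ∨ ((r:ℕ)/2 = n - 1 ∧ (c:ℕ)/2 = 0) ∨
       ((r:ℕ)/2 = (c:ℕ)/2 ∧ 1 ≤ (r:ℕ)/2 ∧ (r:ℕ)/2 + 1 ≤ n - 1) then
      Rm ⟨(r:ℕ) % 2, by omega⟩ ⟨(c:ℕ) % 2, by omega⟩
    else 0

/-- The horocyclic element `u′(α,β,γ)`, written in blocks of row/column sizes (2, 2n−4, 2):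
`[[I₂, A(α,β), −((|α|²+|β|²)/2)·I₂ + γR], [0, I, F(α,β)], [0, 0, I₂]]`, where the k-th 2×2
block of `F(α,β)` is `α_k I₂ + β_k R` and the k-th 2×2 block of `A(α,β)` is `−α_k I₂ + β_k R`. -/
def uPrime (n : ℕ) (α β : Fin (n-2) → ℝ) (γ : ℝ) : Matrix (Fin (2*n)) (Fin (2*n)) ℝ :=
  Matrix.of fun r c =>
    (if r = c then 1 else 0) +
    (if hr : (r:ℕ) < 2 then
      (if hc : 2 ≤ (c:ℕ) ∧ (c:ℕ) < 2*n - 2 then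
        ((-(α ⟨((c:ℕ) - 2)/2, by omega⟩)) • I2 + (β ⟨((c:ℕ) - 2)/2, by omega⟩) • Rm)
          ⟨(r:ℕ), hr⟩ ⟨((c:ℕ) - 2) % 2, by omega⟩
      else if hc2 : 2*n - 2 ≤ (c:ℕ) then
        ((-((∑ k, ((α k)^2 + (β k)^2)) / 2)) • I2 + γ • Rm)
          ⟨(r:ℕ), hr⟩ ⟨(c:ℕ) - (2*n - 2), by have := c.isLt; omega⟩
      else 0)
    else if hm : 2 ≤ (r:ℕ) ∧ (r:ℕ) < 2*n - 2 then
      (if 2*n - 2 ≤ (c:ℕ) then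
        ((α ⟨((r:ℕ) - 2)/2, by omega⟩) • I2 + (β ⟨((r:ℕ) - 2)/2, by omega⟩) • Rm)
          ⟨((r:ℕ) - 2) % 2, by omega⟩ ⟨(c:ℕ) - (2*n - 2), by have := c.isLt; omega⟩
      else 0)
    else 0)

/-- Span of standard basis vectors with (0-based) indices in `s`. -/
def stdSpan (n : ℕ) (s : Set ℕ) : Submodule ℝ (Fin (2*n) → ℝ) :=
  Submodule.span ℝ { x | ∃ i : Fin (2*n), (i:ℕ) ∈ s ∧ x = Pi.single i 1 }

/-- `V₋ = span{e_{2n−1}, e_{2n}}` (1-based indices). -/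
def Vminus (n : ℕ) : Submodule ℝ (Fin (2*n) → ℝ) := stdSpan n { i | 2*n - 2 ≤ i }
/-- `V₊ = span{e₁, e₂}` (1-based indices). -/
def Vplus (n : ℕ) : Submodule ℝ (Fin (2*n) → ℝ) := stdSpan n { i | i < 2 }

/-- The image `M·V` of a subspace under `x ↦ Mx`. -/
def mapMat {n : ℕ} (M : Matrix (Fin (2*n)) (Fin (2*n)) ℝ)
    (V : Submodule ℝ (Fin (2*n) → ℝ)) : Submodule ℝ (Fin (2*n) → ℝ) :=
  V.map M.mulVecLin

/-- The symplectic form `ω_h(x,y) = xᵀJ_h y`. -/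
def omegaH (n : ℕ) (x y : Fin (2*n) → ℝ) : ℝ :=
  dotProduct x ((Jh n).mulVec y)

/-- `W^{⊥ω_h}`, the subspace of all `x` with `ω_h(x,w) = 0` for all `w ∈ W`. -/
def omegaHPerp (n : ℕ) (W : Submodule ℝ (Fin (2*n) → ℝ)) : Submodule ℝ (Fin (2*n) → ℝ) where
  carrier := { x | ∀ w ∈ W, omegaH n x w = 0 }
  add_mem' := by
    intro a b ha hb w hw
    simp only [omegaH, add_dotProduct] at *
    rw [ha w hw, hb w hw, add_zero]
  zero_mem' := by
    intro w hw
    simp [omegaH, zero_dotProduct]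
  smul_mem' := by
    intro c x hx w hw
    simp only [omegaH, smul_dotProduct] at *
    rw [hx w hw, smul_zero]

/-- A subspace is ω_h-isotropic if ω_h vanishes identically on it. -/
def IsIsotropicH (n : ℕ) (V : Submodule ℝ (Fin (2*n) → ℝ)) : Prop :=
  ∀ x ∈ V, ∀ y ∈ V, omegaH n x y = 0

/-! ### Auxiliary material for `uPrime_symplectic` -/

section Aux

/- 2×2 key identities -/
lemma keyA (a b : ℝ) : Rm * (a • I2 + b • Rm) + ((-a) • I2 + b • Rm)ᵀ * Rm = 0 := by
  ext i j
  fin_cases i <;> fin_cases j <;>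
    simp [Rm, I2, Matrix.mul_apply, Fin.sum_univ_two, Matrix.transpose_apply,
      Matrix.vecHead, Matrix.vecTail] <;> ring

lemma keyA' (a b : ℝ) : Rm * ((-a) • I2 + b • Rm) + (a • I2 + b • Rm)ᵀ * Rm = 0 := by
  have := keyA (-a) b; rwa [neg_neg] at this

lemma keyF (a b : ℝ) : (a • I2 + b • Rm)ᵀ * Rm * (a • I2 + b • Rm) = (a^2 + b^2) • Rm := by
  ext i j
  fin_cases i <;> fin_cases j <;>
    simp [Rm, I2, Matrix.mul_apply, Fin.sum_univ_two, Matrix.transpose_apply,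
      Matrix.vecHead, Matrix.vecTail] <;> ring

lemma keyC (s c : ℝ) :
    Rm * ((-(s/2)) • I2 + c • Rm) + ((-(s/2)) • I2 + c • Rm)ᵀ * Rm = (-s) • Rm := by
  ext i j
  fin_cases i <;> fin_cases j <;>
    simp [Rm, I2, Matrix.mul_apply, Fin.sum_univ_two, Matrix.transpose_apply,
      Matrix.vecHead, Matrix.vecTail] <;> ring

/- block index equivalence -/
def eqv (n : ℕ) : Fin n × Fin 2 ≃ Fin (2*n) where
  toFun p := ⟨2*(p.1:ℕ) + (p.2:ℕ), by have := p.1.isLt; have := p.2.isLt; omega⟩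
  invFun i := (⟨(i:ℕ)/2, by have := i.isLt; omega⟩, ⟨(i:ℕ)%2, by omega⟩)
  left_inv p := by ext <;> (simp; omega)
  right_inv i := by ext; simp; omega

def toMat (n : ℕ) (B : Fin n → Fin n → Matrix (Fin 2) (Fin 2) ℝ) :
    Matrix (Fin n × Fin 2) (Fin n × Fin 2) ℝ :=
  Matrix.of fun p q => B p.1 q.1 p.2 q.2

lemma toMat_mul (n : ℕ) (B C : Fin n → Fin n → Matrix (Fin 2) (Fin 2) ℝ) :
    toMat n B * toMat n C = toMat n (fun b c => ∑ d, B b d * C d c) := by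
  ext ⟨b, i⟩ ⟨c, j⟩
  simp [toMat, Matrix.mul_apply, Fintype.sum_prod_type, Matrix.sum_apply]

lemma toMat_transpose (n : ℕ) (B : Fin n → Fin n → Matrix (Fin 2) (Fin 2) ℝ) :
    (toMat n B)ᵀ = toMat n (fun b c => (B c b)ᵀ) := by
  ext ⟨b, i⟩ ⟨c, j⟩
  simp [toMat]

/- the permutation underlying Jh -/
def sg (n : ℕ) (b : Fin n) : Fin n :=
  if (b:ℕ) = 0 then ⟨n-1, by have := b.isLt; omega⟩
  else if (b:ℕ) = n-1 then ⟨0, by have := b.isLt; omega⟩ else b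

lemma sg_invol (n : ℕ) (hn : 2 ≤ n) (b : Fin n) : sg n (sg n b) = b := by
  unfold sg
  split_ifs <;> (try rfl) <;> (apply Fin.ext; simp_all <;> omega)

lemma sg_eq_iff (n : ℕ) (hn : 2 ≤ n) (b e : Fin n) : sg n e = b ↔ e = sg n b := by
  constructor
  · rintro rfl; rw [sg_invol n hn]
  · rintro rfl; rw [sg_invol n hn]

lemma sg_spec (n : ℕ) (hn : 2 ≤ n) (b c : Fin n) :
    c = sg n b ↔ ((b:ℕ) = 0 ∧ (c:ℕ) = n-1) ∨ ((b:ℕ) = n-1 ∧ (c:ℕ) = 0) ∨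
      ((b:ℕ) = (c:ℕ) ∧ 1 ≤ (b:ℕ) ∧ (b:ℕ) + 1 ≤ n - 1) := by
  have hb := b.isLt
  have hc := c.isLt
  unfold sg
  split_ifs with h1 h2 <;> simp [Fin.ext_iff] <;> omega

lemma sg_val0 {n : ℕ} {b : Fin n} (hb : (b:ℕ) = 0) : ((sg n b):ℕ) = n-1 := by
  unfold sg; rw [if_pos hb]

lemma sg_val_last {n : ℕ} (hn : 2 ≤ n) {b : Fin n} (hb : (b:ℕ) = n-1) : ((sg n b):ℕ) = 0 := by
  unfold sg; rw [if_neg (by omega), if_pos hb]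

lemma sg_mid {n : ℕ} {b : Fin n} (hb : 1 ≤ (b:ℕ) ∧ (b:ℕ) ≤ n-2) : sg n b = b := by
  unfold sg; rw [if_neg (by omega), if_neg (by omega)]

/- block versions of Jh and uPrime -/
def Jb (n : ℕ) : Fin n → Fin n → Matrix (Fin 2) (Fin 2) ℝ :=
  fun b c => if c = sg n b then Rm else 0

def Nb (n : ℕ) (α β : Fin (n-2) → ℝ) (γ : ℝ) : Fin n → Fin n → Matrix (Fin 2) (Fin 2) ℝ :=
  fun b c =>
    if (b:ℕ) = 0 then
      (if h : 1 ≤ (c:ℕ) ∧ (c:ℕ) ≤ n - 2 then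
        (-(α ⟨(c:ℕ)-1, by omega⟩)) • I2 + (β ⟨(c:ℕ)-1, by omega⟩) • Rm
      else if (c:ℕ) = n-1 then
        (-((∑ k, ((α k)^2 + (β k)^2)) / 2)) • I2 + γ • Rm
      else 0)
    else if h : 1 ≤ (b:ℕ) ∧ (b:ℕ) ≤ n - 2 then
      (if (c:ℕ) = n-1 then (α ⟨(b:ℕ)-1, by omega⟩) • I2 + (β ⟨(b:ℕ)-1, by omega⟩) • Rm else 0)
    else 0

def Ub (n : ℕ) (α β : Fin (n-2) → ℝ) (γ : ℝ) : Fin n → Fin n → Matrix (Fin 2) (Fin 2) ℝ :=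
  fun b c => (if b = c then 1 else 0) + Nb n α β γ b c

variable {n : ℕ} {α β : Fin (n-2) → ℝ} {γ : ℝ}

/- Nb evaluation lemmas -/
lemma Nb_row_last (hn : 2 ≤ n) {d c : Fin n} (hd : (d:ℕ) = n-1) : Nb n α β γ d c = 0 := by
  unfold Nb; rw [if_neg (by omega), dif_neg (by omega)]

lemma Nb_col0 (hn : 2 ≤ n) {d c : Fin n} (hc : (c:ℕ) = 0) : Nb n α β γ d c = 0 := by
  unfold Nb
  by_cases hd : (d:ℕ) = 0
  · rw [if_pos hd, dif_neg (by omega), if_neg (by omega)]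
  · rw [if_neg hd]
    by_cases hm : 1 ≤ (d:ℕ) ∧ (d:ℕ) ≤ n-2
    · rw [dif_pos hm, if_neg (by omega)]
    · rw [dif_neg hm]

lemma Nb_0mid {d c : Fin n} (hd : (d:ℕ) = 0) (hc : 1 ≤ (c:ℕ) ∧ (c:ℕ) ≤ n-2) :
    Nb n α β γ d c = (-(α ⟨(c:ℕ)-1, by omega⟩)) • I2 + (β ⟨(c:ℕ)-1, by omega⟩) • Rm := by
  unfold Nb; rw [if_pos hd, dif_pos hc]

lemma Nb_0last (hn : 2 ≤ n) {d c : Fin n} (hd : (d:ℕ) = 0) (hc : (c:ℕ) = n-1) :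
    Nb n α β γ d c = (-((∑ k, ((α k)^2 + (β k)^2)) / 2)) • I2 + γ • Rm := by
  unfold Nb; rw [if_pos hd, dif_neg (by omega), if_pos hc]

lemma Nb_mid_last {d c : Fin n} (hd : 1 ≤ (d:ℕ) ∧ (d:ℕ) ≤ n-2) (hc : (c:ℕ) = n-1) :
    Nb n α β γ d c = (α ⟨(d:ℕ)-1, by omega⟩) • I2 + (β ⟨(d:ℕ)-1, by omega⟩) • Rm := by
  unfold Nb; rw [if_neg (by omega), dif_pos hd, if_pos hc]

lemma Nb_mid_not {d c : Fin n} (hd : 1 ≤ (d:ℕ) ∧ (d:ℕ) ≤ n-2) (hc : (c:ℕ) ≠ n-1) :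
    Nb n α β γ d c = 0 := by
  unfold Nb; rw [if_neg (by omega), dif_pos hd, if_neg hc]

lemma Nb_0_0 (hn : 2 ≤ n) {d c : Fin n} (hd : (d:ℕ) = 0)
    (hc1 : ¬(1 ≤ (c:ℕ) ∧ (c:ℕ) ≤ n-2)) (hc2 : (c:ℕ) ≠ n-1) : Nb n α β γ d c = 0 := by
  unfold Nb; rw [if_pos hd, dif_neg hc1, if_neg hc2]

/- reindexing of the sum over the middle blocks -/
lemma sum_mid (hn : 2 ≤ n) {M : Type*} [AddCommMonoid M] (g : Fin (n-2) → M) :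
    (∑ e : Fin n, if h : 1 ≤ (e:ℕ) ∧ (e:ℕ) ≤ n-2 then g ⟨(e:ℕ)-1, by omega⟩ else 0)
      = ∑ k, g k := by
  set g' : ℕ → M := fun m => if h : m < n-2 then g ⟨m, h⟩ else 0 with hg'
  have h1 : ∀ e : Fin n, (if h : 1 ≤ (e:ℕ) ∧ (e:ℕ) ≤ n-2 then g ⟨(e:ℕ)-1, by omega⟩ else 0)
      = if 1 ≤ (e:ℕ) ∧ (e:ℕ) ≤ n-2 then g' ((e:ℕ)-1) else 0 := by
    intro e
    by_cases h : 1 ≤ (e:ℕ) ∧ (e:ℕ) ≤ n-2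
    · rw [dif_pos h, if_pos h]
      simp only [hg']
      rw [dif_pos (show (e:ℕ)-1 < n-2 by omega)]
    · rw [dif_neg h, if_neg h]
  simp_rw [h1]
  rw [Fin.sum_univ_eq_sum_range (fun m => if 1 ≤ m ∧ m ≤ n-2 then g' (m-1) else 0) n]
  rw [← Finset.sum_filter]
  have h2 : (Finset.range n).filter (fun m => 1 ≤ m ∧ m ≤ n-2) = Finset.Ico 1 (n-1) := by
    ext m; simp [Finset.mem_filter, Finset.mem_range, Finset.mem_Ico]; omega
  rw [h2, Finset.sum_Ico_eq_sum_range]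
  have h3 : ∀ k : Fin (n-2), g k = g' (k:ℕ) := by
    intro k
    simp only [hg']
    rw [dif_pos k.isLt]
  simp_rw [h3]
  rw [Fin.sum_univ_eq_sum_range (fun m => g' m) (n-2)]
  have h4 : n - 1 - 1 = n - 2 := by omega
  rw [h4]
  apply Finset.sum_congr rfl
  intro m _
  congr 1
  omega

/- the T4 term -/
lemma T4_term (hn : 2 ≤ n) (b c e : Fin n) :
    (Nb n α β γ (sg n e) b)ᵀ * Rm * Nb n α β γ e c =
      if h : (1 ≤ (e:ℕ) ∧ (e:ℕ) ≤ n-2) ∧ (b:ℕ) = n-1 ∧ (c:ℕ) = n-1 then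
        (((α ⟨(e:ℕ)-1, by omega⟩)^2 + (β ⟨(e:ℕ)-1, by omega⟩)^2)) • Rm
      else 0 := by
  by_cases he : 1 ≤ (e:ℕ) ∧ (e:ℕ) ≤ n-2
  · rw [sg_mid he]
    by_cases hb : (b:ℕ) = n-1
    · by_cases hc : (c:ℕ) = n-1
      · rw [dif_pos ⟨he, hb, hc⟩, Nb_mid_last he hb, Nb_mid_last he hc]
        exact keyF _ _
      · rw [dif_neg (by tauto), Nb_mid_not he hc, mul_zero]
    · rw [dif_neg (by tauto), Nb_mid_not he hb, Matrix.transpose_zero, zero_mul, zero_mul]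
  · rw [dif_neg (by tauto)]
    by_cases he0 : (e:ℕ) = 0
    · have : ((sg n e : Fin n):ℕ) = n-1 := sg_val0 he0
      rw [Nb_row_last hn this, Matrix.transpose_zero, zero_mul, zero_mul]
    · have hel : (e:ℕ) = n-1 := by have := e.isLt; omega
      rw [Nb_row_last hn hel, mul_zero]

/- the cancellation -/
lemma E_zero (hn : 2 ≤ n) (b c : Fin n) :
    Rm * Nb n α β γ (sg n b) c +
      ((Nb n α β γ (sg n c) b)ᵀ * Rm +
        ∑ e : Fin n, (Nb n α β γ (sg n e) b)ᵀ * Rm * Nb n α β γ e c) = 0 := by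
  have hb := b.isLt
  have hc := c.isLt
  simp_rw [T4_term hn b c]
  by_cases hbl : (b:ℕ) = n-1
  · by_cases hcl : (c:ℕ) = n-1
    · -- b = c = last
      rw [Nb_0last hn (sg_val_last hn hbl) hcl, Nb_0last hn (sg_val_last hn hcl) hbl]
      have hs : (∑ e : Fin n, if h : (1 ≤ (e:ℕ) ∧ (e:ℕ) ≤ n-2) ∧ (b:ℕ) = n-1 ∧ (c:ℕ) = n-1 then
          (((α ⟨(e:ℕ)-1, by omega⟩)^2 + (β ⟨(e:ℕ)-1, by omega⟩)^2)) • Rm else 0)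
          = (∑ k, ((α k)^2 + (β k)^2)) • Rm := by
        rw [Finset.sum_smul, ← sum_mid hn (fun k => (((α k)^2 + (β k)^2)) • Rm)]
        apply Finset.sum_congr rfl
        intro e _
        by_cases he : 1 ≤ (e:ℕ) ∧ (e:ℕ) ≤ n-2
        · rw [dif_pos ⟨he, hbl, hcl⟩, dif_pos he]
        · rw [dif_neg (by tauto), dif_neg he]
      rw [hs, ← add_assoc, keyC]
      rw [← add_smul]
      simp
    · -- b = last, c not last
      have hz : (∑ e : Fin n, if h : (1 ≤ (e:ℕ) ∧ (e:ℕ) ≤ n-2) ∧ (b:ℕ) = n-1 ∧ (c:ℕ) = n-1 then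
          (((α ⟨(e:ℕ)-1, by omega⟩)^2 + (β ⟨(e:ℕ)-1, by omega⟩)^2)) • Rm else 0) = 0 :=
        Finset.sum_eq_zero fun e _ => dif_neg (by tauto)
      rw [hz, add_zero]
      by_cases hc0 : (c:ℕ) = 0
      · rw [Nb_col0 hn hc0, mul_zero, Nb_row_last hn (sg_val0 hc0), Matrix.transpose_zero,
          zero_mul, add_zero]
      · have hcm : 1 ≤ (c:ℕ) ∧ (c:ℕ) ≤ n-2 := by omega
        rw [Nb_0mid (sg_val_last hn hbl) hcm, sg_mid hcm, Nb_mid_last hcm hbl]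
        exact keyA' _ _
  · have hz : (∑ e : Fin n, if h : (1 ≤ (e:ℕ) ∧ (e:ℕ) ≤ n-2) ∧ (b:ℕ) = n-1 ∧ (c:ℕ) = n-1 then
        (((α ⟨(e:ℕ)-1, by omega⟩)^2 + (β ⟨(e:ℕ)-1, by omega⟩)^2)) • Rm else 0) = 0 :=
      Finset.sum_eq_zero fun e _ => dif_neg (by tauto)
    rw [hz, add_zero]
    by_cases hb0 : (b:ℕ) = 0
    · -- b = 0 : Nb (sg b) c = Nb last c = 0
      rw [Nb_row_last hn (sg_val0 hb0), mul_zero, zero_add]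
      by_cases hcl : (c:ℕ) = n-1
      · rw [Nb_0_0 hn (sg_val_last hn hcl) (by omega) (by omega), Matrix.transpose_zero, zero_mul]
      · by_cases hc0 : (c:ℕ) = 0
        · rw [Nb_row_last hn (sg_val0 hc0), Matrix.transpose_zero, zero_mul]
        · have hcm : 1 ≤ (c:ℕ) ∧ (c:ℕ) ≤ n-2 := by omega
          rw [sg_mid hcm, Nb_mid_not hcm (by omega), Matrix.transpose_zero, zero_mul]
    · have hbm : 1 ≤ (b:ℕ) ∧ (b:ℕ) ≤ n-2 := by omega
      rw [sg_mid hbm]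
      by_cases hcl : (c:ℕ) = n-1
      · rw [Nb_mid_last hbm hcl, Nb_0mid (sg_val_last hn hcl) hbm]
        exact keyA _ _
      · rw [Nb_mid_not hbm hcl, mul_zero, zero_add]
        by_cases hc0 : (c:ℕ) = 0
        · rw [Nb_row_last hn (sg_val0 hc0), Matrix.transpose_zero, zero_mul]
        · have hcm : 1 ≤ (c:ℕ) ∧ (c:ℕ) ≤ n-2 := by omega
          rw [sg_mid hcm, Nb_mid_not hcm (by omega), Matrix.transpose_zero, zero_mul]

lemma transpose_ite01 (P : Prop) [Decidable P] :
    (if P then (1:Matrix (Fin 2) (Fin 2) ℝ) else 0)ᵀ = if P then 1 else 0 := by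
  split <;> simp

/- main block identity -/
lemma main_block (hn : 2 ≤ n) (b c : Fin n) :
    ∑ e : Fin n, (Ub n α β γ (sg n e) b)ᵀ * Rm * Ub n α β γ e c = Jb n b c := by
  have expand : ∀ e : Fin n, (Ub n α β γ (sg n e) b)ᵀ * Rm * Ub n α β γ e c
      = (if e = sg n b then Rm * Ub n α β γ e c else 0)
        + ((if e = c then (Nb n α β γ (sg n e) b)ᵀ * Rm else 0)
           + (Nb n α β γ (sg n e) b)ᵀ * Rm * Nb n α β γ e c) := by
    intro e
    calc (Ub n α β γ (sg n e) b)ᵀ * Rm * Ub n α β γ e c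
        = ((if sg n e = b then (1:Matrix (Fin 2) (Fin 2) ℝ) else 0)
            + Nb n α β γ (sg n e) b)ᵀ * Rm * Ub n α β γ e c := rfl
      _ = ((if e = sg n b then (1:Matrix (Fin 2) (Fin 2) ℝ) else 0)
            + Nb n α β γ (sg n e) b)ᵀ * Rm * Ub n α β γ e c := by
          rw [if_congr (sg_eq_iff n hn b e) rfl rfl]
      _ = (if e = sg n b then Rm * Ub n α β γ e c else 0)
            + (Nb n α β γ (sg n e) b)ᵀ * Rm * Ub n α β γ e c := by
          rw [Matrix.transpose_add, transpose_ite01, add_mul, add_mul, ite_mul, ite_mul,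
            one_mul, zero_mul, zero_mul]
      _ = (if e = sg n b then Rm * Ub n α β γ e c else 0)
            + ((if e = c then (Nb n α β γ (sg n e) b)ᵀ * Rm else 0)
               + (Nb n α β γ (sg n e) b)ᵀ * Rm * Nb n α β γ e c) := by
          congr 1
          rw [show Ub n α β γ e c
              = (if e = c then (1:Matrix (Fin 2) (Fin 2) ℝ) else 0) + Nb n α β γ e c from rfl,
            mul_add, mul_ite, mul_one, mul_zero]
  rw [Finset.sum_congr rfl fun e _ => expand e]
  rw [Finset.sum_add_distrib, Finset.sum_add_distrib]
  rw [Finset.sum_ite_eq' Finset.univ (sg n b) (fun e => Rm * Ub n α β γ e c)]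
  rw [Finset.sum_ite_eq' Finset.univ c (fun e => (Nb n α β γ (sg n e) b)ᵀ * Rm)]
  simp only [Finset.mem_univ, if_true]
  rw [show Ub n α β γ (sg n b) c = (if sg n b = c then 1 else 0) + Nb n α β γ (sg n b) c from rfl]
  rw [mul_add, mul_ite, mul_one, mul_zero, add_assoc, E_zero hn b c, add_zero]
  rw [Jb]
  exact if_congr eq_comm rfl rfl

end Aux

section Reindex
variable {n : ℕ}

lemma Jh_reindex (hn : 2 ≤ n) :
    (Jh n).submatrix (eqv n) (eqv n) = toMat n (Jb n) := by
  ext ⟨b, i⟩ ⟨c, j⟩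
  have hi := i.isLt
  have hj := j.isLt
  have h1 : (2*(b:ℕ) + (i:ℕ))/2 = (b:ℕ) := by omega
  have h2 : (2*(c:ℕ) + (j:ℕ))/2 = (c:ℕ) := by omega
  have h3 : (2*(b:ℕ) + (i:ℕ)) % 2 = (i:ℕ) := by omega
  have h4 : (2*(c:ℕ) + (j:ℕ)) % 2 = (j:ℕ) := by omega
  simp only [Matrix.submatrix_apply, toMat, Jh, Jb, Matrix.of_apply, eqv, Equiv.coe_fn_mk,
    h1, h2, h3, h4, Fin.eta]
  by_cases h : c = sg n b
  · rw [if_pos h, if_pos ((sg_spec n hn b c).mp h)]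
  · rw [if_neg h, if_neg (fun hc => h ((sg_spec n hn b c).mpr hc))]
    simp

lemma uPrime_reindex (hn : 2 ≤ n) (α β : Fin (n-2) → ℝ) (γ : ℝ) :
    (uPrime n α β γ).submatrix (eqv n) (eqv n) = toMat n (Ub n α β γ) := by
  ext ⟨b, i⟩ ⟨c, j⟩
  have hi := i.isLt
  have hj := j.isLt
  have hb := b.isLt
  have hc := c.isLt
  simp only [Matrix.submatrix_apply, uPrime, Ub, toMat, Matrix.of_apply, eqv, Equiv.coe_fn_mk,
    Matrix.add_apply]
  congr 1
  · by_cases hbc : b = c <;> by_cases hij : (i:ℕ) = (j:ℕ) <;>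
      simp_all [Matrix.one_apply, Matrix.zero_apply, Fin.ext_iff] <;> omega
  · by_cases hb0 : (b:ℕ) = 0
    · rw [dif_pos (show 2*(b:ℕ)+(i:ℕ) < 2 by omega)]
      by_cases hcm : 1 ≤ (c:ℕ) ∧ (c:ℕ) ≤ n - 2
      · rw [dif_pos (show 2 ≤ 2*(c:ℕ)+(j:ℕ) ∧ 2*(c:ℕ)+(j:ℕ) < 2*n-2 by omega)]
        simp only [Nb, if_pos hb0, dif_pos hcm,
          show (2*(c:ℕ)+(j:ℕ)-2)/2 = (c:ℕ)-1 by omega,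
          show (2*(c:ℕ)+(j:ℕ)-2)%2 = (j:ℕ) by omega,
          show 2*(b:ℕ)+(i:ℕ) = (i:ℕ) by omega,
          Fin.eta, Matrix.add_apply]
      · by_cases hcl : (c:ℕ) = n - 1
        · rw [dif_neg (by omega), dif_pos (show 2*n-2 ≤ 2*(c:ℕ)+(j:ℕ) by omega)]
          simp only [Nb, if_pos hb0, dif_neg hcm, if_pos hcl,
            show 2*(c:ℕ)+(j:ℕ) - (2*n-2) = (j:ℕ) by omega,
            show 2*(b:ℕ)+(i:ℕ) = (i:ℕ) by omega, Fin.eta, Matrix.add_apply]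
        · rw [dif_neg (by omega), dif_neg (by omega)]
          simp only [Nb, if_pos hb0, dif_neg hcm, if_neg hcl, Matrix.zero_apply]
    · by_cases hbm : 1 ≤ (b:ℕ) ∧ (b:ℕ) ≤ n - 2
      · rw [dif_neg (by omega), dif_pos (show 2 ≤ 2*(b:ℕ)+(i:ℕ) ∧ 2*(b:ℕ)+(i:ℕ) < 2*n-2 by omega)]
        by_cases hcl : (c:ℕ) = n - 1
        · rw [if_pos (show 2*n-2 ≤ 2*(c:ℕ)+(j:ℕ) by omega)]
          simp only [Nb, if_neg hb0, dif_pos hbm, if_pos hcl,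
            show (2*(b:ℕ)+(i:ℕ)-2)/2 = (b:ℕ)-1 by omega,
            show (2*(b:ℕ)+(i:ℕ)-2)%2 = (i:ℕ) by omega,
            show 2*(c:ℕ)+(j:ℕ)-(2*n-2) = (j:ℕ) by omega, Fin.eta, Matrix.add_apply]
        · rw [if_neg (by omega)]
          simp only [Nb, if_neg hb0, dif_pos hbm, if_neg hcl, Matrix.zero_apply]
      · rw [dif_neg (by omega), dif_neg (by omega)]
        simp only [Nb, if_neg hb0, dif_neg hbm, Matrix.zero_apply]

end Reindex

/-- `u′(α,β,γ)` preserves the symplectic form `ω_h`: `u′ᵀ · J_h · u′ = J_h`. -/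
theorem uPrime_symplectic (n : ℕ) (hn : 2 ≤ n) (α β : Fin (n-2) → ℝ) (γ : ℝ) :
    (uPrime n α β γ)ᵀ * Jh n * uPrime n α β γ = Jh n := by
  have key : ((uPrime n α β γ)ᵀ * Jh n * uPrime n α β γ).submatrix (eqv n) (eqv n)
      = (Jh n).submatrix (eqv n) (eqv n) := by
    rw [← Matrix.submatrix_mul_equiv ((uPrime n α β γ)ᵀ * Jh n) (uPrime n α β γ)
        (eqv n) (eqv n) (eqv n),
      ← Matrix.submatrix_mul_equiv ((uPrime n α β γ)ᵀ) (Jh n) (eqv n) (eqv n) (eqv n),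
      ← Matrix.transpose_submatrix, uPrime_reindex hn α β γ, Jh_reindex hn,
      toMat_transpose, toMat_mul, toMat_mul]
    refine congrArg (toMat n) (funext fun b => funext fun c => ?_)
    have inner1 : ∀ e : Fin n, (∑ d, ((Ub n α β γ) d b)ᵀ * Jb n d e)
        = (Ub n α β γ (sg n e) b)ᵀ * Rm := by
      intro e
      have h : ∀ d : Fin n, ((Ub n α β γ) d b)ᵀ * Jb n d e
          = if d = sg n e then (Ub n α β γ d b)ᵀ * Rm else 0 := by
        intro d
        have hcond : (e = sg n d) ↔ (d = sg n e) := eq_comm.trans (sg_eq_iff n hn e d)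
        rw [show Jb n d e = if e = sg n d then Rm else 0 from rfl,
          if_congr hcond rfl rfl, mul_ite, mul_zero]
      simp_rw [h]
      rw [Finset.sum_ite_eq' Finset.univ (sg n e) (fun d => (Ub n α β γ d b)ᵀ * Rm)]
      simp
    simp_rw [inner1]
    exact main_block hn b c
  ext r c
  have h2 := congrFun (congrFun key ((eqv n).symm r)) ((eqv n).symm c)
  simpa only [Matrix.submatrix_apply, Equiv.apply_symm_apply] using h2


end
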